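/- arXiv:1411.1251 — 3 statements merged into one kernel-verified Lean document; each statement's English description precedes it below -/
import Mathlib

section
/- Let (Ω,μ) be a σ-finite measure space, B a Banach space, and 1 ≤ q0 < ∞. For each k ∈ ℤ let S_k be a map assigning to each f ∈ L^{q0}(Ω;B) a nonnegative measurable function S_k f on Ω, subadditive in the sense that S_k(f+g) ≤ S_k(f) + S_k(g) almost everywhere for all f,g. Let (u_n)_{n∈ℤ} and (v_n)_{n∈ℤ} be sequences in L^{q0}(Ω;B), and let σ : ℤ → [0,∞) satisfy w = Σ_{j∈ℤ} σ(j) < ∞ and ∫_Ω (S_k u_n)^{q0} dμ ≤ σ(n−k)^{q0} ∫_Ω ‖v_n‖^{q0} dμ for all n, k ∈ ℤ. Then Σ_{k∈ℤ} ∫_Ω ( sup_{j≤m} S_k(Σ_{n=j}^m u_n) )^{q0} dμ ≤ w^{q0} Σ_{n∈ℤ} ∫_Ω ‖v_n‖^{q0} dμ, where the supremum runs over all pairs of integers j ≤ m. -/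
open MeasureTheory ENNReal

private lemma aop_rpow_cancel {x : ℝ≥0∞} {q : ℝ} (hq : q ≠ 0) : (x ^ (1/q)) ^ q = x := by
  rw [← ENNReal.rpow_mul, one_div, inv_mul_cancel₀ hq, ENNReal.rpow_one]

private lemma aop_rpow_le_of_le_rpow {x C : ℝ≥0∞} {q : ℝ} (hq : 0 < q)
    (h : x ≤ C ^ (1/q)) : x ^ q ≤ C :=
  (ENNReal.rpow_le_rpow h hq.le).trans_eq (aop_rpow_cancel hq.ne')

private lemma aop_iSup_rpow_le {ι : Sort*} {f : ι → ℝ≥0∞} {C : ℝ≥0∞} {q : ℝ} (hq : 0 < q)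
    (h : ∀ i, (f i) ^ q ≤ C) : (⨆ i, f i) ^ q ≤ C := by
  refine aop_rpow_le_of_le_rpow hq (iSup_le fun i => ?_)
  have : f i = ((f i) ^ q) ^ (1/q) := by
    rw [← ENNReal.rpow_mul, mul_one_div, div_self hq.ne', ENNReal.rpow_one]
  rw [this]
  exact ENNReal.rpow_le_rpow (h i) (by positivity)

private lemma aop_tsum_rpow_le {α : Type*} {f : α → ℝ≥0∞} {C : ℝ≥0∞} {q : ℝ} (hq : 0 < q)
    (h : ∀ s : Finset α, (∑ n ∈ s, f n) ^ q ≤ C) : (∑' n, f n) ^ q ≤ C := by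
  rw [ENNReal.tsum_eq_iSup_sum]
  exact aop_iSup_rpow_le hq h

private lemma aop_mink_fin {Ω : Type} [MeasurableSpace Ω] (μ : Measure Ω) {q : ℝ} (hq : 1 ≤ q)
    {α : Type*} {g : α → Ω → ℝ≥0∞} (hg : ∀ n, Measurable (g n)) (s : Finset α) :
    ∫⁻ ω, (∑ n ∈ s, g n ω) ^ q ∂μ ≤ (∑ n ∈ s, (∫⁻ ω, (g n ω) ^ q ∂μ) ^ (1/q)) ^ q := by
  classical
  have hq0 : 0 < q := one_pos.trans_le hq
  induction s using Finset.cons_induction with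
  | empty => simp [ENNReal.zero_rpow_of_pos hq0]
  | cons a s ha ih =>
    have hFm : Measurable fun ω => ∑ n ∈ s, g n ω :=
      Finset.measurable_sum s fun n _ => hg n
    have key := ENNReal.lintegral_Lp_add_le (μ := μ) (hg a).aemeasurable hFm.aemeasurable hq
    simp_rw [Finset.sum_cons]
    calc ∫⁻ ω, (g a ω + ∑ n ∈ s, g n ω) ^ q ∂μ
        = ((∫⁻ ω, (g a ω + ∑ n ∈ s, g n ω) ^ q ∂μ) ^ (1/q)) ^ q :=
          (aop_rpow_cancel hq0.ne').symm
      _ ≤ ((∫⁻ ω, (g a ω) ^ q ∂μ) ^ (1/q) + (∫⁻ ω, (∑ n ∈ s, g n ω) ^ q ∂μ) ^ (1/q)) ^ q :=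
          ENNReal.rpow_le_rpow key hq0.le
      _ ≤ ((∫⁻ ω, (g a ω) ^ q ∂μ) ^ (1/q) + ∑ n ∈ s, (∫⁻ ω, (g n ω) ^ q ∂μ) ^ (1/q)) ^ q := by
          refine ENNReal.rpow_le_rpow (add_le_add le_rfl ?_) hq0.le
          calc (∫⁻ ω, (∑ n ∈ s, g n ω) ^ q ∂μ) ^ (1/q)
              ≤ ((∑ n ∈ s, (∫⁻ ω, (g n ω) ^ q ∂μ) ^ (1/q)) ^ q) ^ (1/q) :=
                ENNReal.rpow_le_rpow ih (by positivity)
            _ = ∑ n ∈ s, (∫⁻ ω, (g n ω) ^ q ∂μ) ^ (1/q) := by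
                rw [← ENNReal.rpow_mul, mul_one_div, div_self hq0.ne', ENNReal.rpow_one]

private lemma aop_mink_tsum {Ω : Type} [MeasurableSpace Ω] (μ : Measure Ω) {q : ℝ} (hq : 1 ≤ q)
    {g : ℤ → Ω → ℝ≥0∞} (hg : ∀ n, Measurable (g n)) :
    ∫⁻ ω, (∑' n, g n ω) ^ q ∂μ ≤ (∑' n, (∫⁻ ω, (g n ω) ^ q ∂μ) ^ (1/q)) ^ q := by
  have hq0 : 0 < q := one_pos.trans_le hq
  have hpt : ∀ ω, (∑' n, g n ω) ^ q = ⨆ s : Finset ℤ, (∑ n ∈ s, g n ω) ^ q := by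
    intro ω
    refine le_antisymm (aop_tsum_rpow_le hq0 fun s =>
      le_iSup (fun s : Finset ℤ => (∑ n ∈ s, g n ω) ^ q) s) ?_
    exact iSup_le fun s => ENNReal.rpow_le_rpow (ENNReal.sum_le_tsum s) hq0.le
  simp_rw [hpt]
  rw [lintegral_iSup_directed]
  · refine iSup_le fun s => (aop_mink_fin μ hq hg s).trans ?_
    exact ENNReal.rpow_le_rpow (ENNReal.sum_le_tsum s) hq0.le
  · exact fun s => ((Finset.measurable_sum s fun n _ => hg n).pow_const q).aemeasurable
  · intro s t
    exact ⟨s ∪ t, fun ω => ENNReal.rpow_le_rpow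
        (Finset.sum_le_sum_of_subset Finset.subset_union_left) hq0.le,
      fun ω => ENNReal.rpow_le_rpow
        (Finset.sum_le_sum_of_subset Finset.subset_union_right) hq0.le⟩

private lemma aop_jensen_fin {q : ℝ} (hq : 1 ≤ q) {w z : ℤ → ℝ≥0∞} (hw : ∀ n, w n ≠ ∞)
    (s : Finset ℤ) :
    (∑ n ∈ s, w n * z n) ^ q ≤ (∑ n ∈ s, w n) ^ (q - 1) * ∑ n ∈ s, w n * z n ^ q := by
  have hq0 : 0 < q := one_pos.trans_le hq
  set T := ∑ n ∈ s, w n with hT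
  rcases eq_or_ne T 0 with h0 | h0
  · have hz : ∀ n ∈ s, w n = 0 := Finset.sum_eq_zero_iff.mp h0
    rw [Finset.sum_eq_zero fun n hn => by rw [hz n hn, zero_mul]]
    simp [ENNReal.zero_rpow_of_pos hq0]
  · have hTtop : T ≠ ∞ := by
      rw [hT]
      exact (ENNReal.sum_lt_top.mpr fun n _ => (hw n).lt_top).ne
    have hw' : ∑ n ∈ s, w n * T⁻¹ = 1 := by
      rw [← Finset.sum_mul, ← hT, ENNReal.mul_inv_cancel h0 hTtop]
    have key := ENNReal.rpow_arith_mean_le_arith_mean_rpow s (fun n => w n * T⁻¹) z hw' hq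
    have hTT : T * T⁻¹ = 1 := ENNReal.mul_inv_cancel h0 hTtop
    have hsum : ∑ n ∈ s, w n * z n = T * ∑ n ∈ s, (w n * T⁻¹) * z n := by
      rw [Finset.mul_sum]
      refine Finset.sum_congr rfl fun n hn => ?_
      rw [show T * (w n * T⁻¹ * z n) = (T * T⁻¹) * (w n * z n) by ring, hTT, one_mul]
    have hsum2 : ∑ n ∈ s, (w n * T⁻¹) * z n ^ q = T⁻¹ * ∑ n ∈ s, w n * z n ^ q := by
      rw [Finset.mul_sum]
      exact Finset.sum_congr rfl fun n hn => by ring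
    calc (∑ n ∈ s, w n * z n) ^ q
        = T ^ q * (∑ n ∈ s, (w n * T⁻¹) * z n) ^ q := by
          rw [hsum, ENNReal.mul_rpow_of_nonneg _ _ hq0.le]
      _ ≤ T ^ q * ∑ n ∈ s, (w n * T⁻¹) * z n ^ q := mul_le_mul_right key _
      _ = (T ^ q * T⁻¹) * ∑ n ∈ s, w n * z n ^ q := by rw [hsum2, mul_assoc]
      _ = T ^ (q - 1) * ∑ n ∈ s, w n * z n ^ q := by
          rw [show q - 1 = q + (-1) by ring, ENNReal.rpow_add _ _ h0 hTtop,
            ENNReal.rpow_neg_one]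

private lemma aop_jensen_tsum {q : ℝ} (hq : 1 ≤ q) {w z : ℤ → ℝ≥0∞} (hw : ∀ n, w n ≠ ∞)
    {W : ℝ≥0∞} (hWle : ∑' n, w n ≤ W) :
    (∑' n, w n * z n) ^ q ≤ W ^ (q - 1) * ∑' n, w n * z n ^ q := by
  have hq0 : 0 < q := one_pos.trans_le hq
  refine aop_tsum_rpow_le hq0 fun s => (aop_jensen_fin hq hw s).trans ?_
  exact mul_le_mul' (ENNReal.rpow_le_rpow ((ENNReal.sum_le_tsum s).trans hWle) (by linarith))
    (ENNReal.sum_le_tsum s)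

theorem almost_orthogonality_principle
    {Ω : Type} [MeasurableSpace Ω] (μ : Measure Ω) [SigmaFinite μ]
    {B : Type} [NormedAddCommGroup B]
    (q0 : ℝ) (hq0 : 1 ≤ q0)
    (S : ℤ → (Ω → B) → Ω → ℝ≥0∞)
    (hmeas : ∀ k (f : Ω → B), MemLp f (ENNReal.ofReal q0) μ → Measurable (S k f))
    (hsub : ∀ k (f g : Ω → B), MemLp f (ENNReal.ofReal q0) μ →
      MemLp g (ENNReal.ofReal q0) μ →
      ∀ᵐ ω ∂μ, S k (f + g) ω ≤ S k f ω + S k g ω)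
    (u v : ℤ → Ω → B)
    (hu : ∀ n, MemLp (u n) (ENNReal.ofReal q0) μ)
    (hv : ∀ n, MemLp (v n) (ENNReal.ofReal q0) μ)
    (σ : ℤ → ℝ) (hσ0 : ∀ j, 0 ≤ σ j) (hσ : Summable σ)
    (hdom : ∀ n k : ℤ, ∫⁻ ω, (S k (u n) ω) ^ q0 ∂μ ≤
      ENNReal.ofReal (σ (n - k) ^ q0) * ∫⁻ ω, (‖v n ω‖₊ : ℝ≥0∞) ^ q0 ∂μ) :
    ∑' k : ℤ, ∫⁻ ω, (⨆ (j : ℤ) (m : ℤ) (_ : j ≤ m),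
        S k (fun ω' => ∑ i ∈ Finset.Icc j m, u i ω') ω) ^ q0 ∂μ ≤
      ENNReal.ofReal ((∑' j : ℤ, σ j) ^ q0) *
        ∑' n : ℤ, ∫⁻ ω, (‖v n ω‖₊ : ℝ≥0∞) ^ q0 ∂μ := by
  have hq0' : 0 < q0 := one_pos.trans_le hq0
  set W : ℝ≥0∞ := ENNReal.ofReal (∑' j, σ j) with hWdef
  -- shift invariance of the sums of σ
  have hshift : ∀ kk : ℤ, (∑' n : ℤ, ENNReal.ofReal (σ (n - kk))) = W := by
    intro kk
    have hsum : Summable fun n : ℤ => σ (n - kk) :=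
      (Equiv.subRight kk).summable_iff.mpr hσ
    rw [← ENNReal.ofReal_tsum_of_nonneg (fun n => hσ0 _) hsum, hWdef]
    exact congrArg ENNReal.ofReal ((Equiv.subRight kk).tsum_eq σ)
  have hshift' : ∀ n : ℤ, (∑' k : ℤ, ENNReal.ofReal (σ (n - k))) = W := by
    intro n
    have hsum : Summable fun k : ℤ => σ (n - k) :=
      (Equiv.subLeft n).summable_iff.mpr hσ
    rw [← ENNReal.ofReal_tsum_of_nonneg (fun k => hσ0 _) hsum, hWdef]
    exact congrArg ENNReal.ofReal ((Equiv.subLeft n).tsum_eq σ)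
  -- per-k estimate
  have hper : ∀ k : ℤ, ∫⁻ ω, (⨆ (j : ℤ) (m : ℤ) (_ : j ≤ m),
      S k (fun ω' => ∑ i ∈ Finset.Icc j m, u i ω') ω) ^ q0 ∂μ ≤
      W ^ (q0 - 1) * ∑' n : ℤ, ENNReal.ofReal (σ (n - k)) *
        ∫⁻ ω, (‖v n ω‖₊ : ℝ≥0∞) ^ q0 ∂μ := by
    intro k
    have key : ∀ j m : ℤ, j ≤ m → ∀ᵐ ω ∂μ,
        S k (fun ω' => ∑ i ∈ Finset.Icc j m, u i ω') ω ≤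
          ∑ i ∈ Finset.Icc j m, S k (u i) ω := by
      intro j m hjm
      refine Int.le_induction (motive := fun m _ => ∀ᵐ ω ∂μ,
          S k (fun ω' => ∑ i ∈ Finset.Icc j m, u i ω') ω ≤
            ∑ i ∈ Finset.Icc j m, S k (u i) ω) ?_ ?_ m hjm
      · simp only [Finset.Icc_self, Finset.sum_singleton]
        exact Filter.Eventually.of_forall fun ω => le_rfl
      · intro m hjm ih
        have hnot : (m + 1) ∉ Finset.Icc j m := by simp
        have hIcc : Finset.Icc j (m + 1) = insert (m + 1) (Finset.Icc j m) := by
          ext x; simp only [Finset.mem_Icc, Finset.mem_insert]; omega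
        have hmem : MemLp (fun ω' => ∑ i ∈ Finset.Icc j m, u i ω') (ENNReal.ofReal q0) μ :=
          memLp_finset_sum _ fun i _ => hu i
        have hfun : (fun ω' => ∑ i ∈ Finset.Icc j (m + 1), u i ω')
            = u (m + 1) + fun ω' => ∑ i ∈ Finset.Icc j m, u i ω' := by
          funext ω'
          simp [hIcc, Finset.sum_insert hnot]
        filter_upwards [hsub k (u (m + 1)) (fun ω' => ∑ i ∈ Finset.Icc j m, u i ω')
          (hu (m + 1)) hmem, ih] with ω h1 h2
        rw [hfun, hIcc, Finset.sum_insert hnot]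
        exact h1.trans (add_le_add le_rfl h2)
    have hae : ∀ᵐ ω ∂μ, (⨆ (j : ℤ) (m : ℤ) (_ : j ≤ m),
        S k (fun ω' => ∑ i ∈ Finset.Icc j m, u i ω') ω) ≤ ∑' n : ℤ, S k (u n) ω := by
      have hall : ∀ᵐ ω ∂μ, ∀ (j m : ℤ), j ≤ m →
          S k (fun ω' => ∑ i ∈ Finset.Icc j m, u i ω') ω ≤
            ∑ i ∈ Finset.Icc j m, S k (u i) ω := by
        rw [MeasureTheory.ae_all_iff]
        intro j
        rw [MeasureTheory.ae_all_iff]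
        intro m
        by_cases hjm : j ≤ m
        · filter_upwards [key j m hjm] with ω h _
          exact h
        · exact Filter.Eventually.of_forall fun ω h => absurd h hjm
      filter_upwards [hall] with ω h
      exact iSup_le fun j => iSup_le fun m => iSup_le fun hjm =>
        (h j m hjm).trans (ENNReal.sum_le_tsum _)
    have hSm : ∀ n : ℤ, Measurable (S k (u n)) := fun n => hmeas k (u n) (hu n)
    calc ∫⁻ ω, (⨆ (j : ℤ) (m : ℤ) (_ : j ≤ m),
          S k (fun ω' => ∑ i ∈ Finset.Icc j m, u i ω') ω) ^ q0 ∂μ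
        ≤ ∫⁻ ω, (∑' n : ℤ, S k (u n) ω) ^ q0 ∂μ := by
          refine lintegral_mono_ae ?_
          filter_upwards [hae] with ω h
          exact ENNReal.rpow_le_rpow h hq0'.le
      _ ≤ (∑' n : ℤ, (∫⁻ ω, (S k (u n) ω) ^ q0 ∂μ) ^ (1/q0)) ^ q0 :=
          aop_mink_tsum μ hq0 hSm
      _ ≤ (∑' n : ℤ, ENNReal.ofReal (σ (n - k)) *
            (∫⁻ ω, (‖v n ω‖₊ : ℝ≥0∞) ^ q0 ∂μ) ^ (1/q0)) ^ q0 := by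
          refine ENNReal.rpow_le_rpow (ENNReal.tsum_le_tsum fun n => ?_) hq0'.le
          calc (∫⁻ ω, (S k (u n) ω) ^ q0 ∂μ) ^ (1/q0)
              ≤ (ENNReal.ofReal (σ (n - k) ^ q0) *
                  ∫⁻ ω, (‖v n ω‖₊ : ℝ≥0∞) ^ q0 ∂μ) ^ (1/q0) :=
                ENNReal.rpow_le_rpow (hdom n k) (by positivity)
            _ = ENNReal.ofReal (σ (n - k)) *
                  (∫⁻ ω, (‖v n ω‖₊ : ℝ≥0∞) ^ q0 ∂μ) ^ (1/q0) := by
                rw [ENNReal.mul_rpow_of_nonneg _ _ (by positivity),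
                  ← ENNReal.ofReal_rpow_of_nonneg (hσ0 _) hq0'.le,
                  ← ENNReal.rpow_mul, mul_one_div, div_self hq0'.ne', ENNReal.rpow_one]
      _ ≤ W ^ (q0 - 1) * ∑' n : ℤ, ENNReal.ofReal (σ (n - k)) *
            ((∫⁻ ω, (‖v n ω‖₊ : ℝ≥0∞) ^ q0 ∂μ) ^ (1/q0)) ^ q0 :=
          aop_jensen_tsum hq0 (fun n => ENNReal.ofReal_ne_top) (le_of_eq (hshift k))
      _ = W ^ (q0 - 1) * ∑' n : ℤ, ENNReal.ofReal (σ (n - k)) *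
            ∫⁻ ω, (‖v n ω‖₊ : ℝ≥0∞) ^ q0 ∂μ := by
          congr 1
          refine tsum_congr fun n => ?_
          rw [aop_rpow_cancel hq0'.ne']
  -- sum over k
  have hWq : ENNReal.ofReal ((∑' j, σ j) ^ q0) = W ^ q0 :=
    (ENNReal.ofReal_rpow_of_nonneg (tsum_nonneg hσ0) hq0'.le).symm
  have hWmul : W ^ (q0 - 1) * W ≤ W ^ q0 := by
    rcases eq_or_ne W 0 with h0 | h0
    · simp [h0]
    · refine le_of_eq ?_
      calc W ^ (q0 - 1) * W = W ^ (q0 - 1) * W ^ (1 : ℝ) := by rw [ENNReal.rpow_one]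
        _ = W ^ (q0 - 1 + 1) := (ENNReal.rpow_add _ _ h0 ENNReal.ofReal_ne_top).symm
        _ = W ^ q0 := by rw [sub_add_cancel]
  calc ∑' k : ℤ, ∫⁻ ω, (⨆ (j : ℤ) (m : ℤ) (_ : j ≤ m),
        S k (fun ω' => ∑ i ∈ Finset.Icc j m, u i ω') ω) ^ q0 ∂μ
      ≤ ∑' k : ℤ, W ^ (q0 - 1) * ∑' n : ℤ, ENNReal.ofReal (σ (n - k)) *
          ∫⁻ ω, (‖v n ω‖₊ : ℝ≥0∞) ^ q0 ∂μ := ENNReal.tsum_le_tsum hper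
    _ = W ^ (q0 - 1) * ∑' k : ℤ, ∑' n : ℤ, ENNReal.ofReal (σ (n - k)) *
          ∫⁻ ω, (‖v n ω‖₊ : ℝ≥0∞) ^ q0 ∂μ := ENNReal.tsum_mul_left
    _ = W ^ (q0 - 1) * ∑' n : ℤ, ∑' k : ℤ, ENNReal.ofReal (σ (n - k)) *
          ∫⁻ ω, (‖v n ω‖₊ : ℝ≥0∞) ^ q0 ∂μ := by rw [ENNReal.tsum_comm]
    _ = W ^ (q0 - 1) * ∑' n : ℤ, W * ∫⁻ ω, (‖v n ω‖₊ : ℝ≥0∞) ^ q0 ∂μ := by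
        congr 1
        refine tsum_congr fun n => ?_
        rw [ENNReal.tsum_mul_right, hshift' n]
    _ = (W ^ (q0 - 1) * W) * ∑' n : ℤ, ∫⁻ ω, (‖v n ω‖₊ : ℝ≥0∞) ^ q0 ∂μ := by
        rw [ENNReal.tsum_mul_left, mul_assoc]
    _ ≤ ENNReal.ofReal ((∑' j : ℤ, σ j) ^ q0) *
          ∑' n : ℤ, ∫⁻ ω, (‖v n ω‖₊ : ℝ≥0∞) ^ q0 ∂μ := by
        rw [hWq]
        exact mul_le_mul_left hWmul _
end

section
/- Let B be a Banach space, d ≥ 1, and let 1 ≤ q0 ≤ q < ∞. There is a constant C depending only on q and q0 such that for every locally integrable f : ℝ^d → B, every x ∈ ℝ^d, and every finite increasing sequence 0 < t_0 < t_1 < … < t_m of positive reals, (Σ_{i=1}^m ‖A_{t_i} f(x) − A_{t_{i−1}} f(x)‖^q)^{1/q} ≤ C ( SV_{q0}(A)f(x) + LV_{q0}(A)f(x) + V_q(E)f(x) ), where V_q(E)f(x) = sup (Σ_{i=1}^m ‖E_{n_i} f(x) − E_{n_{i−1}} f(x)‖^q)^{1/q}, the supremum running over all finite increasing sequences n_0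 < n_1 < … < n_m of integers. -/
open MeasureTheory ENNReal

noncomputable section

/-- A Banach space `B` has martingale cotype `q0`. -/
def MartingaleCotype (B : Type*) [NormedAddCommGroup B] [NormedSpace ℝ B] [CompleteSpace B]
    (q0 : ℝ) : Prop :=
  ∃ C : ℝ, 0 < C ∧
    ∀ (Ω : Type) (m0 : MeasurableSpace Ω) (μ : Measure Ω), SigmaFinite μ →
      ∀ ℱ : Filtration ℕ m0, ∀ f : Ω → B, Integrable f μ →
        (∫⁻ ω, (‖f ω‖₊ : ℝ≥0∞) ^ q0 ∂μ) < ∞ →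
        (∫⁻ ω, (‖(μ[f|ℱ 0]) ω‖₊ : ℝ≥0∞) ^ q0 ∂μ) +
          ∑' n : ℕ, ∫⁻ ω, (‖(μ[f|ℱ (n+1)]) ω - (μ[f|ℱ n]) ω‖₊ : ℝ≥0∞) ^ q0 ∂μ ≤
        ENNReal.ofReal (C ^ q0) * ∫⁻ ω, (‖f ω‖₊ : ℝ≥0∞) ^ q0 ∂μ

variable {B : Type*} [NormedAddCommGroup B] [NormedSpace ℝ B] [CompleteSpace B]

/-- Average of `f` over the ball of radius `t` around `x`. -/
def ballAvg (d : ℕ) (f : EuclideanSpace ℝ (Fin d) → B) (t : ℝ)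
    (x : EuclideanSpace ℝ (Fin d)) : B :=
  (volume (Metric.ball (0 : EuclideanSpace ℝ (Fin d)) t)).toReal⁻¹ •
    ∫ y in Metric.ball (0 : EuclideanSpace ℝ (Fin d)) t, f (x + y)

/-- `q`-variation of a family `(a t)_{t>0}`. -/
def vqFamily (q : ℝ) (a : ℝ → B) : ℝ≥0∞ :=
  ⨆ (m : ℕ) (t : ℕ → ℝ) (_ : StrictMono t) (_ : 0 < t 0),
    ((‖a (t 0)‖₊ : ℝ≥0∞) ^ q +
      ∑ k ∈ Finset.range m, (‖a (t (k+1)) - a (t k)‖₊ : ℝ≥0∞) ^ q) ^ (1/q)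

/-- q-variation of a sequence indexed by ℕ. -/
def vqSeq (q : ℝ) (a : ℕ → B) : ℝ≥0∞ :=
  ⨆ (m : ℕ) (t : ℕ → ℕ) (_ : StrictMono t),
    ((‖a (t 0)‖₊ : ℝ≥0∞) ^ q +
      ∑ k ∈ Finset.range m, (‖a (t (k+1)) - a (t k)‖₊ : ℝ≥0∞) ^ q) ^ (1/q)

/-- The dyadic cube of generation `n` containing `x`. -/
def dyadicCube (d : ℕ) (n : ℤ) (x : EuclideanSpace ℝ (Fin d)) :
    Set (EuclideanSpace ℝ (Fin d)) :=
  {y | ∀ i, ⌊y i / (2:ℝ) ^ n⌋ = ⌊x i / (2:ℝ) ^ n⌋}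

/-- The dyadic cube `2^n (k + [0,1)^d)`. -/
def dyadicCubeK (d : ℕ) (n : ℤ) (k : Fin d → ℤ) : Set (EuclideanSpace ℝ (Fin d)) :=
  {y | ∀ i, ⌊y i / (2:ℝ) ^ n⌋ = k i}

/-- `E_n f (x)`: average over the dyadic cube of generation `n` containing `x`. -/
def dyadicAvg (d : ℕ) (f : EuclideanSpace ℝ (Fin d) → B) (n : ℤ)
    (x : EuclideanSpace ℝ (Fin d)) : B :=
  ((2:ℝ) ^ (n * d))⁻¹ • ∫ y in dyadicCube d n x, f y

/-- Long variation operator. -/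
def longVar (d : ℕ) (q0 : ℝ) (f : EuclideanSpace ℝ (Fin d) → B)
    (x : EuclideanSpace ℝ (Fin d)) : ℝ≥0∞ :=
  (∑' n : ℤ, (‖ballAvg d f ((2:ℝ) ^ n) x - dyadicAvg d f n x‖₊ : ℝ≥0∞) ^ q0) ^ (1/q0)

/-- Short variation operator. -/
def shortVar (d : ℕ) (q0 : ℝ) (f : EuclideanSpace ℝ (Fin d) → B)
    (x : EuclideanSpace ℝ (Fin d)) : ℝ≥0∞ :=
  (∑' k : ℤ, ⨆ (m : ℕ) (t : ℕ → ℝ) (_ : StrictMono t) (_ : (2:ℝ) ^ k ≤ t 0)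
      (_ : t m ≤ (2:ℝ) ^ (k+1)),
      ∑ i ∈ Finset.range m,
        (‖ballAvg d f (t (i+1)) x - ballAvg d f (t i) x‖₊ : ℝ≥0∞) ^ q0) ^ (1/q0)

end
/-- `q`-variation of the dyadic martingale averages. -/
noncomputable def martVar {B : Type*} [NormedAddCommGroup B] [NormedSpace ℝ B]
    [CompleteSpace B] (d : ℕ) (q : ℝ) (f : EuclideanSpace ℝ (Fin d) → B)
    (x : EuclideanSpace ℝ (Fin d)) : ℝ≥0∞ :=
  ⨆ (m : ℕ) (t : ℕ → ℤ) (_ : StrictMono t),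
    (∑ i ∈ Finset.range m,
      (‖dyadicAvg d f (t (i+1)) x - dyadicAvg d f (t i) x‖₊ : ℝ≥0∞) ^ q) ^ (1/q)



section AuxVq

lemma myExtendSM {α : Type*} [Semiring α] [PartialOrder α] [IsStrictOrderedRing α] (r : ℕ) (v : ℕ → α)
    (h : ∀ j, j < r → v j < v (j+1)) :
    ∃ u : ℕ → α, StrictMono u ∧ ∀ j, j ≤ r → u j = v j := by
  refine ⟨fun j => if j ≤ r then v j else v r + ((j - r : ℕ) : α), ?_, ?_⟩
  · apply strictMono_nat_of_lt_succ
    intro j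
    rcases lt_trichotomy j r with hj | hj | hj
    · have h1 : j ≤ r := hj.le
      by_cases h2 : j + 1 ≤ r
      · simp only [h1, h2, if_pos]
        exact h j hj
      · have hjr : j + 1 = r + 1 := by omega
        simp only [h1, if_pos, if_neg h2]
        have : j = r := by omega
        subst this
        have : (j + 1 - j : ℕ) = 1 := by omega
        rw [this]
        simpa using lt_add_of_pos_right (v j) (by norm_num : (0:α) < 1)
    · subst hj
      have h2 : ¬ (j + 1 ≤ j) := by omega
      simp only [le_refl, if_pos, if_neg h2]
      have : (j + 1 - j : ℕ) = 1 := by omega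
      rw [this]
      simpa using lt_add_of_pos_right (v j) (by norm_num : (0:α) < 1)
    · have h1 : ¬ (j ≤ r) := by omega
      have h2 : ¬ (j + 1 ≤ r) := by omega
      simp only [if_neg h1, if_neg h2]
      have : ((j - r : ℕ) : α) < ((j + 1 - r : ℕ) : α) :=
        Nat.cast_lt.mpr (by omega)
      exact add_lt_add_right this _
  · intro j hj
    simp [hj]

lemma mySumRpow {ι : Type*} (s : Finset ι) (a : ι → ℝ≥0∞) {p q : ℝ}
    (hp : 0 < p) (hpq : p ≤ q) :
    (∑ i ∈ s, a i ^ q) ^ (1/q) ≤ (∑ i ∈ s, a i ^ p) ^ (1/p) := by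
  classical
  have hq : 0 < q := lt_of_lt_of_le hp hpq
  induction s using Finset.induction with
  | empty => simp [ENNReal.zero_rpow_of_pos, one_div, inv_pos, hp, hq]
  | @insert i s' hx ih =>
    rw [Finset.sum_insert hx, Finset.sum_insert hx]
    have h1 : (a i ^ q + ∑ j ∈ s', a j ^ q) ^ (1/q)
        ≤ (a i ^ q + (((∑ j ∈ s', a j ^ q) ^ (1/q))) ^ q) ^ (1/q) := by
      rw [← ENNReal.rpow_mul, one_div, inv_mul_cancel₀ hq.ne', ENNReal.rpow_one]
    refine h1.trans ?_
    refine le_trans (ENNReal.rpow_add_rpow_le (a i) _ hp hpq) ?_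
    apply ENNReal.rpow_le_rpow _ (by positivity)
    refine add_le_add_right ?_ _
    calc ((∑ j ∈ s', a j ^ q) ^ (1/q)) ^ p ≤ ((∑ j ∈ s', a j ^ p) ^ (1/p)) ^ p := by
          exact ENNReal.rpow_le_rpow ih hp.le
      _ = ∑ j ∈ s', a j ^ p := by
          rw [← ENNReal.rpow_mul, one_div, inv_mul_cancel₀ hp.ne', ENNReal.rpow_one]

lemma myAbstract {B : Type*} [NormedAddCommGroup B]
    (q0 q : ℝ) (hq0 : 1 ≤ q0) (hq : q0 ≤ q)
    (A : ℝ → B) (E : ℤ → B)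
    (m : ℕ) (t : ℕ → ℝ) (ht : StrictMono t) (ht0 : 0 < t 0) :
    (∑ i ∈ Finset.range m, (‖A (t (i+1)) - A (t i)‖₊ : ℝ≥0∞) ^ q) ^ (1/q) ≤
      3 * ((∑' k : ℤ, ⨆ (m' : ℕ) (u : ℕ → ℝ) (_ : StrictMono u) (_ : (2:ℝ) ^ k ≤ u 0)
              (_ : u m' ≤ (2:ℝ) ^ (k+1)),
              ∑ i ∈ Finset.range m', (‖A (u (i+1)) - A (u i)‖₊ : ℝ≥0∞) ^ q0) ^ (1/q0)
          + (∑' n : ℤ, (‖A ((2:ℝ) ^ n) - E n‖₊ : ℝ≥0∞) ^ q0) ^ (1/q0)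
          + ⨆ (m' : ℕ) (u : ℕ → ℤ) (_ : StrictMono u),
              (∑ i ∈ Finset.range m', (‖E (u (i+1)) - E (u i)‖₊ : ℝ≥0∞) ^ q) ^ (1/q)) := by
  classical
  have hq1 : (1:ℝ) ≤ q := le_trans hq0 hq
  have hq0pos : (0:ℝ) < q0 := lt_of_lt_of_le one_pos hq0
  have hqpos : (0:ℝ) < q := lt_of_lt_of_le one_pos hq1
  -- notation
  set bS : ℤ → ℝ≥0∞ := fun k =>
    ⨆ (m' : ℕ) (u : ℕ → ℝ) (_ : StrictMono u) (_ : (2:ℝ) ^ k ≤ u 0)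
        (_ : u m' ≤ (2:ℝ) ^ (k+1)),
        ∑ i ∈ Finset.range m', (‖A (u (i+1)) - A (u i)‖₊ : ℝ≥0∞) ^ q0 with hbS
  set ℓ : ℤ → ℝ≥0∞ := fun k => (‖A ((2:ℝ) ^ k) - E k‖₊ : ℝ≥0∞) ^ q0 with hℓ
  set S : ℝ≥0∞ := (∑' k : ℤ, bS k) ^ (1/q0) with hS
  set L : ℝ≥0∞ := (∑' k : ℤ, ℓ k) ^ (1/q0) with hL
  set M : ℝ≥0∞ := ⨆ (m' : ℕ) (u : ℕ → ℤ) (_ : StrictMono u),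
      (∑ i ∈ Finset.range m', (‖E (u (i+1)) - E (u i)‖₊ : ℝ≥0∞) ^ q) ^ (1/q) with hM
  set g : ℕ → ℝ≥0∞ := fun i => (‖A (t (i+1)) - A (t i)‖₊ : ℝ≥0∞) with hg
  have tpos : ∀ i, 0 < t i := fun i => lt_of_lt_of_le ht0 (ht.monotone (Nat.zero_le i))
  set n : ℕ → ℤ := fun i => ⌊Real.logb 2 (t i)⌋ with hn
  have hlow : ∀ i, (2:ℝ) ^ (n i) ≤ t i := by
    intro i
    rw [← Real.rpow_intCast]
    exact (Real.le_logb_iff_rpow_le one_lt_two (tpos i)).mp (Int.floor_le _)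
  have hhigh : ∀ i, t i < (2:ℝ) ^ (n i + 1) := by
    intro i
    rw [← Real.rpow_intCast]
    refine (Real.logb_lt_iff_lt_rpow one_lt_two (tpos i)).mp ?_
    push_cast
    exact Int.lt_floor_add_one _
  have hmono : Monotone n := by
    intro i j hij
    exact Int.floor_le_floor (Real.logb_le_logb_of_le one_lt_two (tpos i) (ht.monotone hij))
  have hcr : ∀ i, n i ≤ n (i+1) := fun i => hmono (Nat.le_succ i)
  set K : Finset ℕ := (Finset.range m).filter (fun i => n i < n (i+1)) with hK
  set P : Finset ℕ := (Finset.range m).filter (fun i => ¬ n i < n (i+1)) with hP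
  -- P indices have equal consecutive n
  have hPeq : ∀ i ∈ P, n (i+1) = n i := by
    intro i hi
    rw [hP, Finset.mem_filter] at hi
    exact le_antisymm (not_lt.mp hi.2) (hcr i)
  -- chain bound within a block
  have hchain : ∀ a b : ℕ, a ≤ b → n a = n b →
      (∑ j ∈ Finset.Ico a b, g j ^ q0) ≤ bS (n a) := by
    intro a b hab hnab
    have hu : StrictMono (fun j => t (a + j)) := fun x y hxy => ht (by omega)
    have h1 : (2:ℝ) ^ (n a) ≤ t (a + 0) := by simpa using hlow a
    have h2 : t (a + (b - a)) ≤ (2:ℝ) ^ (n a + 1) := by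
      have : a + (b - a) = b := by omega
      rw [this, hnab]
      exact (hhigh b).le
    calc ∑ j ∈ Finset.Ico a b, g j ^ q0
        = ∑ j ∈ Finset.range (b - a), g (a + j) ^ q0 := Finset.sum_Ico_eq_sum_range ..
      _ = ∑ j ∈ Finset.range (b - a),
            (‖A (t (a + (j+1))) - A (t (a + j))‖₊ : ℝ≥0∞) ^ q0 := by
          refine Finset.sum_congr rfl fun j _ => ?_
          have : a + (j + 1) = (a + j) + 1 := by omega
          rw [this, hg]
      _ ≤ bS (n a) := by
          rw [hbS]
          exact le_iSup_of_le (b - a) (le_iSup_of_le (fun j => t (a + j))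
            (le_iSup_of_le hu (le_iSup_of_le h1 (le_iSup_of_le h2 le_rfl))))
  -- single pair bound within a block
  have hpair : ∀ (k : ℤ) (s : ℝ), (2:ℝ)^k ≤ s → s ≤ (2:ℝ)^(k+1) →
      (‖A s - A ((2:ℝ)^k)‖₊ : ℝ≥0∞) ^ q0 ≤ bS k := by
    intro k s h1 h2
    rcases eq_or_lt_of_le h1 with h1' | h1'
    · rw [← h1']
      simp [ENNReal.zero_rpow_of_pos hq0pos]
    · obtain ⟨u, hu, hue⟩ := myExtendSM 1 (fun j => if j = 0 then (2:ℝ)^k else s)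
        (by intro j hj; interval_cases j; simpa using h1')
      have hu0 : u 0 = (2:ℝ)^k := by simpa using hue 0 (by norm_num)
      have hu1 : u 1 = s := by simpa using hue 1 le_rfl
      calc (‖A s - A ((2:ℝ)^k)‖₊ : ℝ≥0∞) ^ q0
          = ∑ i ∈ Finset.range 1, (‖A (u (i+1)) - A (u i)‖₊ : ℝ≥0∞) ^ q0 := by
            simp [hu0, hu1]
        _ ≤ bS k := by
            rw [hbS]
            exact le_iSup_of_le 1 (le_iSup_of_le u (le_iSup_of_le hu
              (le_iSup_of_le (le_of_eq hu0.symm) (le_iSup_of_le (hu1 ▸ h2) le_rfl))))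
  -- P part
  have hPpart : (∑ i ∈ P, g i ^ q) ^ (1/q) ≤ S := by
    refine le_trans (mySumRpow P g hq0pos hq) ?_
    rw [hS]
    apply ENNReal.rpow_le_rpow _ (by positivity)
    calc ∑ i ∈ P, g i ^ q0
        = ∑ k ∈ P.image n, ∑ i ∈ P.filter (fun i => n i = k), g i ^ q0 :=
          (Finset.sum_fiberwise_of_maps_to (fun i hi => Finset.mem_image_of_mem n hi) _).symm
      _ ≤ ∑ k ∈ P.image n, bS k := by
          refine Finset.sum_le_sum fun k hk => ?_
          obtain ⟨i0, hi0, hni0⟩ := Finset.mem_image.mp hk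
          set I : Finset ℕ := (Finset.range (m+1)).filter (fun i => n i = k) with hI
          have hi0m : i0 ∈ Finset.range m := (Finset.mem_filter.mp hi0).1
          have hInon : I.Nonempty := by
            refine ⟨i0, Finset.mem_filter.mpr ⟨?_, hni0⟩⟩
            have := Finset.mem_range.mp hi0m
            exact Finset.mem_range.mpr (by omega)
          set a := I.min' hInon with ha
          set b := I.max' hInon with hb
          have hna : n a = k := (Finset.mem_filter.mp (I.min'_mem hInon)).2
          have hnb : n b = k := (Finset.mem_filter.mp (I.max'_mem hInon)).2
          have hab : a ≤ b := I.min'_le _ (I.max'_mem hInon)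
          have hsub : P.filter (fun i => n i = k) ⊆ Finset.Ico a b := by
            intro i hi
            obtain ⟨hiP, hik⟩ := Finset.mem_filter.mp hi
            have him : i ∈ Finset.range m := (Finset.mem_filter.mp hiP).1
            have him' := Finset.mem_range.mp him
            have hik' : n (i+1) = k := (hPeq i hiP).trans hik
            have h1 : a ≤ i := I.min'_le i
              (Finset.mem_filter.mpr ⟨Finset.mem_range.mpr (by omega), hik⟩)
            have h2 : i + 1 ≤ b := I.le_max' (i+1)
              (Finset.mem_filter.mpr ⟨Finset.mem_range.mpr (by omega), hik'⟩)
            exact Finset.mem_Ico.mpr ⟨h1, by omega⟩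
          calc ∑ i ∈ P.filter (fun i => n i = k), g i ^ q0
              ≤ ∑ i ∈ Finset.Ico a b, g i ^ q0 :=
                Finset.sum_le_sum_of_subset hsub
            _ ≤ bS (n a) := hchain a b hab (hna.trans hnb.symm)
            _ = bS k := by rw [hna]
      _ ≤ ∑' k, bS k := ENNReal.sum_le_tsum _
  -- strict monotonicity of n on K
  have hKmem : ∀ i ∈ K, i ∈ Finset.range m ∧ n i < n (i+1) := fun i hi =>
    Finset.mem_filter.mp hi
  have key1 : ∀ x ∈ K, ∀ y ∈ K, x < y → n (x+1) < n (y+1) := by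
    intro x hx y hy hxy
    have h1 : n (x+1) ≤ n y := hmono (by omega)
    have h2 := (hKmem y hy).2
    omega
  have key0 : ∀ x ∈ K, ∀ y ∈ K, x < y → n x < n y := by
    intro x hx y hy hxy
    have h1 : n (x+1) ≤ n y := hmono (by omega)
    have h2 := (hKmem x hx).2
    omega
  have hinj1 : ∀ x ∈ K, ∀ y ∈ K, n (x+1) = n (y+1) → x = y := by
    intro x hx y hy hxy
    rcases lt_trichotomy x y with h | h | h
    · exact absurd hxy (ne_of_lt (key1 x hx y hy h))
    · exact h
    · exact absurd hxy.symm (ne_of_lt (key1 y hy x hx h))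
  have hinj0 : ∀ x ∈ K, ∀ y ∈ K, n x = n y → x = y := by
    intro x hx y hy hxy
    rcases lt_trichotomy x y with h | h | h
    · exact absurd hxy (ne_of_lt (key0 x hx y hy h))
    · exact h
    · exact absurd hxy.symm (ne_of_lt (key0 y hy x hx h))
  -- sums over K of per-block quantities
  have hKsum1 : ∀ F : ℤ → ℝ≥0∞, ∑ i ∈ K, F (n (i+1)) ≤ ∑' k, F k := by
    intro F
    rw [← Finset.sum_image hinj1]
    exact ENNReal.sum_le_tsum _
  have hKsum0 : ∀ F : ℤ → ℝ≥0∞, ∑ i ∈ K, F (n i) ≤ ∑' k, F k := by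
    intro F
    rw [← Finset.sum_image hinj0]
    exact ENNReal.sum_le_tsum _
  -- K components (i)-(iv)
  have hKa : (∑ i ∈ K, (‖A (t (i+1)) - A ((2:ℝ)^(n (i+1)))‖₊ : ℝ≥0∞) ^ q) ^ (1/q) ≤ S := by
    refine le_trans (mySumRpow K _ hq0pos hq) ?_
    rw [hS]
    apply ENNReal.rpow_le_rpow _ (by positivity)
    exact le_trans (Finset.sum_le_sum fun i _ =>
      hpair (n (i+1)) (t (i+1)) (hlow (i+1)) (hhigh (i+1)).le) (hKsum1 bS)
  have hKe : (∑ i ∈ K, (‖A ((2:ℝ)^(n i)) - A (t i)‖₊ : ℝ≥0∞) ^ q) ^ (1/q) ≤ S := by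
    refine le_trans (mySumRpow K _ hq0pos hq) ?_
    rw [hS]
    apply ENNReal.rpow_le_rpow _ (by positivity)
    refine le_trans (Finset.sum_le_sum fun i _ => ?_) (hKsum0 bS)
    rw [show A ((2:ℝ)^(n i)) - A (t i) = -(A (t i) - A ((2:ℝ)^(n i))) by abel, nnnorm_neg]
    exact hpair (n i) (t i) (hlow i) (hhigh i).le
  have hKb : (∑ i ∈ K, (‖A ((2:ℝ)^(n (i+1))) - E (n (i+1))‖₊ : ℝ≥0∞) ^ q) ^ (1/q) ≤ L := by
    refine le_trans (mySumRpow K _ hq0pos hq) ?_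
    rw [hL]
    apply ENNReal.rpow_le_rpow _ (by positivity)
    exact hKsum1 ℓ
  have hKd : (∑ i ∈ K, (‖E (n i) - A ((2:ℝ)^(n i))‖₊ : ℝ≥0∞) ^ q) ^ (1/q) ≤ L := by
    refine le_trans (mySumRpow K _ hq0pos hq) ?_
    rw [hL]
    apply ENNReal.rpow_le_rpow _ (by positivity)
    refine le_trans (le_of_eq (Finset.sum_congr rfl fun i _ => by
      rw [show E (n i) - A ((2:ℝ)^(n i)) = -(A ((2:ℝ)^(n i)) - E (n i)) by abel, nnnorm_neg]))
      (hKsum0 ℓ)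
  -- K component (v): the martingale chain
  have hKv : (∑ i ∈ K, (‖E (n (i+1)) - E (n i)‖₊ : ℝ≥0∞) ^ q) ^ (1/q) ≤ M := by
    rcases Nat.eq_zero_or_pos K.card with hr | hr
    · rw [Finset.card_eq_zero.mp hr, Finset.sum_empty,
        ENNReal.zero_rpow_of_pos (by positivity : (0:ℝ) < 1/q)]
      exact zero_le
    · set r := K.card with hrdef
      set σ : Fin r ↪o ℕ := K.orderEmbOfFin rfl with hσ
      set e : ℕ → ℕ := fun j => if h : j < r then σ ⟨j, h⟩ else 0 with he
      have heσ : ∀ j (h : j < r), e j = σ ⟨j, h⟩ := fun j h => dif_pos h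
      have heK : ∀ j, j < r → e j ∈ K := by
        intro j h; rw [heσ j h]; exact Finset.orderEmbOfFin_mem K rfl _
      have hemono : ∀ j1 j2, j1 < j2 → j2 < r → e j1 < e j2 := by
        intro j1 j2 h12 h2
        rw [heσ j1 (by omega), heσ j2 h2]
        exact σ.strictMono (Fin.mk_lt_mk.mpr h12)
      have hgap : ∀ j, j + 1 < r → ∀ x, e j < x → x < e (j+1) → x ∉ K := by
        intro j hj x h1 h2 hxK
        have hmem : x ∈ Set.range σ := by
          rw [Finset.range_orderEmbOfFin]; exact hxK
        obtain ⟨j', hj'⟩ := hmem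
        rw [heσ j (by omega)] at h1
        rw [heσ (j+1) hj] at h2
        rw [← hj'] at h1 h2
        have hlt1 : (⟨j, by omega⟩ : Fin r) < j' := σ.lt_iff_lt.mp h1
        have hlt2 : j' < (⟨j+1, hj⟩ : Fin r) := σ.lt_iff_lt.mp h2
        rw [Fin.lt_def] at hlt1 hlt2
        simp only [Fin.val_mk] at hlt1 hlt2
        omega
      have hconst : ∀ j, j + 1 < r → n (e j + 1) = n (e (j+1)) := by
        intro j hj
        have hlt : e j < e (j+1) := hemono j (j+1) (by omega) hj
        have aux : ∀ x, e j + 1 ≤ x → x ≤ e (j+1) → n x = n (e j + 1) := by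
          intro x
          induction x with
          | zero => intro h1 _; omega
          | succ x ih =>
            intro h1 h2
            rcases Nat.eq_or_lt_of_le h1 with h1' | h1'
            · rw [← h1']
            · have hx1 : e j + 1 ≤ x := by omega
              have hx2 : x ≤ e (j+1) := by omega
              have hxm : x < m := by
                have h3 := Finset.mem_range.mp (hKmem _ (heK (j+1) hj)).1
                omega
              have hxK : x ∉ K := hgap j hj x (by omega) (by omega)
              have h4 : ¬ (n x < n (x+1)) := fun hc =>
                hxK (Finset.mem_filter.mpr ⟨Finset.mem_range.mpr hxm, hc⟩)
              have h5 := hcr x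
              have heq : n (x+1) = n x := by omega
              rw [heq]; exact ih hx1 hx2
        exact (aux (e (j+1)) (by omega) le_rfl).symm
      set v : ℕ → ℤ := fun j => if j = 0 then n (e 0) else n (e (j-1) + 1) with hv
      have hveq : ∀ j, 0 < j → j < r → v j = n (e j) := by
        intro j h0 hjr
        have : v j = n (e (j-1) + 1) := by simp [hv, Nat.pos_iff_ne_zero.mp h0]
        rw [this]
        have h6 := hconst (j-1) (by omega)
        rwa [Nat.sub_add_cancel h0] at h6
      have hveq' : ∀ j, j < r → v j = n (e j) := by
        intro j hjr
        rcases Nat.eq_zero_or_pos j with rfl | h0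
        · rfl
        · exact hveq j h0 hjr
      have hvs : ∀ j, j < r → v j < v (j+1) := by
        intro j hj
        have h1 : v (j+1) = n (e j + 1) := by simp [hv]
        rw [hveq' j hj, h1]
        exact (hKmem _ (heK j hj)).2
      obtain ⟨u, hu, hue⟩ := myExtendSM r v hvs
      have hsum : ∑ j ∈ Finset.range r, (‖E (u (j+1)) - E (u j)‖₊ : ℝ≥0∞) ^ q
          = ∑ i ∈ K, (‖E (n (i+1)) - E (n i)‖₊ : ℝ≥0∞) ^ q := by
        refine Finset.sum_bij (fun j _ => e j) ?_ ?_ ?_ ?_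
        · intro j hj; exact heK j (Finset.mem_range.mp hj)
        · intro j1 h1 j2 h2 h12
          rcases lt_trichotomy j1 j2 with h | h | h
          · exact absurd h12 (ne_of_lt (hemono j1 j2 h (Finset.mem_range.mp h2)))
          · exact h
          · exact absurd h12.symm (ne_of_lt (hemono j2 j1 h (Finset.mem_range.mp h1)))
        · intro b hb
          have hmem : b ∈ Set.range σ := by rw [Finset.range_orderEmbOfFin]; exact hb
          obtain ⟨j', hj'⟩ := hmem
          refine ⟨j'.1, Finset.mem_range.mpr j'.2, ?_⟩
          show e j'.1 = b
          rw [heσ j'.1 j'.2]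
          simpa using hj'
        · intro j hj
          have hjr := Finset.mem_range.mp hj
          have hu1 : u (j+1) = n (e j + 1) := by
            rw [hue (j+1) (by omega)]
            simp [hv]
          have hu0 : u j = n (e j) := by
            rw [hue j (by omega)]
            exact hveq' j hjr
          rw [hu1, hu0]
      rw [← hsum, hM]
      exact le_iSup_of_le r (le_iSup_of_le u (le_iSup_of_le hu le_rfl))
  -- triangle decomposition
  have htri : ∀ i, g i ≤ (‖A (t (i+1)) - A ((2:ℝ)^(n (i+1)))‖₊ : ℝ≥0∞)
      + ((‖A ((2:ℝ)^(n (i+1))) - E (n (i+1))‖₊ : ℝ≥0∞)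
      + ((‖E (n (i+1)) - E (n i)‖₊ : ℝ≥0∞)
      + ((‖E (n i) - A ((2:ℝ)^(n i))‖₊ : ℝ≥0∞)
      + (‖A ((2:ℝ)^(n i)) - A (t i)‖₊ : ℝ≥0∞)))) := by
    intro i
    have hdec : A (t (i+1)) - A (t i) = (A (t (i+1)) - A ((2:ℝ)^(n (i+1))))
        + ((A ((2:ℝ)^(n (i+1))) - E (n (i+1)))
        + ((E (n (i+1)) - E (n i))
        + ((E (n i) - A ((2:ℝ)^(n i)))
        + (A ((2:ℝ)^(n i)) - A (t i))))) := by abel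
    have hnn : ‖A (t (i+1)) - A (t i)‖₊ ≤ ‖A (t (i+1)) - A ((2:ℝ)^(n (i+1)))‖₊
        + (‖A ((2:ℝ)^(n (i+1))) - E (n (i+1))‖₊
        + (‖E (n (i+1)) - E (n i)‖₊
        + (‖E (n i) - A ((2:ℝ)^(n i))‖₊
        + ‖A ((2:ℝ)^(n i)) - A (t i)‖₊))) := by
      rw [hdec]
      exact (nnnorm_add_le _ _).trans (add_le_add_right ((nnnorm_add_le _ _).trans
        (add_le_add_right ((nnnorm_add_le _ _).trans
        (add_le_add_right (nnnorm_add_le _ _) _)) _)) _)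
    show (‖A (t (i+1)) - A (t i)‖₊ : ℝ≥0∞) ≤ _
    exact_mod_cast hnn
  -- assemble the K part via Minkowski
  have hKpart : (∑ i ∈ K, g i ^ q) ^ (1/q) ≤ S + (L + (M + (L + S))) := by
    have step1 : (∑ i ∈ K, g i ^ q) ^ (1/q)
        ≤ (∑ i ∈ K, ((‖A (t (i+1)) - A ((2:ℝ)^(n (i+1)))‖₊ : ℝ≥0∞)
          + ((‖A ((2:ℝ)^(n (i+1))) - E (n (i+1))‖₊ : ℝ≥0∞)
          + ((‖E (n (i+1)) - E (n i)‖₊ : ℝ≥0∞)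
          + ((‖E (n i) - A ((2:ℝ)^(n i))‖₊ : ℝ≥0∞)
          + (‖A ((2:ℝ)^(n i)) - A (t i)‖₊ : ℝ≥0∞))))) ^ q) ^ (1/q) :=
      ENNReal.rpow_le_rpow (Finset.sum_le_sum fun i _ =>
        ENNReal.rpow_le_rpow (htri i) hqpos.le) (by positivity)
    refine step1.trans ?_
    refine le_trans (ENNReal.Lp_add_le K _ _ hq1) (add_le_add hKa ?_)
    refine le_trans (ENNReal.Lp_add_le K _ _ hq1) (add_le_add hKb ?_)
    refine le_trans (ENNReal.Lp_add_le K _ _ hq1) (add_le_add hKv ?_)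
    exact le_trans (ENNReal.Lp_add_le K _ _ hq1) (add_le_add hKd hKe)
  -- final assembly
  have hsplit : (∑ i ∈ Finset.range m, g i ^ q)
      = (∑ i ∈ K, g i ^ q) + (∑ i ∈ P, g i ^ q) :=
    (Finset.sum_filter_add_sum_filter_not (Finset.range m) (fun i => n i < n (i+1)) _).symm
  calc (∑ i ∈ Finset.range m, (‖A (t (i+1)) - A (t i)‖₊ : ℝ≥0∞) ^ q) ^ (1/q)
      = ((∑ i ∈ K, g i ^ q) + (∑ i ∈ P, g i ^ q)) ^ (1/q) := by rw [← hsplit]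
    _ ≤ (∑ i ∈ K, g i ^ q) ^ (1/q) + (∑ i ∈ P, g i ^ q) ^ (1/q) :=
        ENNReal.rpow_add_le_add_rpow _ _ (by positivity) ((div_le_one hqpos).mpr hq1)
    _ ≤ (S + (L + (M + (L + S)))) + S := add_le_add hKpart hPpart
    _ ≤ ((S + (L + (M + (L + S)))) + S) + (L + (M + M)) := le_self_add
    _ = 3 * (S + L + M) := by ring

end AuxVq

theorem vq_dominated_by_short_long_martingale
    (q0 q : ℝ) (hq0 : 1 ≤ q0) (hq : q0 ≤ q) :
    ∃ C : ℝ, 0 < C ∧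
      ∀ (d : ℕ), 1 ≤ d →
        ∀ (B : Type) (_ : NormedAddCommGroup B) (_ : NormedSpace ℝ B) (_ : CompleteSpace B),
          ∀ f : EuclideanSpace ℝ (Fin d) → B, LocallyIntegrable f volume →
            ∀ (x : EuclideanSpace ℝ (Fin d)) (m : ℕ) (t : ℕ → ℝ),
              StrictMono t → 0 < t 0 →
              (∑ i ∈ Finset.range m,
                  (‖ballAvg d f (t (i+1)) x - ballAvg d f (t i) x‖₊ : ℝ≥0∞) ^ q) ^ (1/q) ≤
                ENNReal.ofReal C *
                  (shortVar d q0 f x + longVar d q0 f x + martVar d q f x) := by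
  refine ⟨3, by norm_num, ?_⟩
  intro d _ B _ _ _ f _ x m t ht ht0
  have h := myAbstract q0 q hq0 hq (fun s => ballAvg d f s x) (fun n => dyadicAvg d f n x)
    m t ht ht0
  have h3 : ENNReal.ofReal (3:ℝ) = (3:ℝ≥0∞) := by norm_num
  rw [h3]
  exact h
end

section
/- Let B be a Banach space, d ≥ 1, 1 ≤ q0 < ∞. There is a constant C depending only on d and q0 with the following property: for all integers k < n and every function h : ℝ^d → B with ∫_{ℝ^d} ‖h‖^{q0} < ∞ which is constant on every dyadic cube of generation n−1, one has ∫_{ℝ^d} ‖A_{2^k} h(x) − h(x)‖^{q0} dx ≤ C · 2^{k−n} ∫_{ℝ^d} ‖h(x)‖^{q0} dx. -/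
open MeasureTheory ENNReal

section AuxLemmas

variable {d : ℕ}

lemma coord_abs_le_norm (y : EuclideanSpace ℝ (Fin d)) (i : Fin d) : |y i| ≤ ‖y‖ := by
  rw [EuclideanSpace.norm_eq, ← Real.sqrt_sq_eq_abs]
  apply Real.sqrt_le_sqrt
  have := Finset.single_le_sum (f := fun j => ‖y j‖ ^ 2)
    (fun j _ => sq_nonneg _) (Finset.mem_univ i)
  simpa [Real.norm_eq_abs, sq_abs] using this

lemma measurable_coord (i : Fin d) :
    Measurable fun y : EuclideanSpace ℝ (Fin d) => y i :=
  (measurable_pi_apply i).comp (WithLp.measurable_ofLp 2 _)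

lemma floor_eq_iff' {s : ℝ} (hs : 0 < s) {t : ℝ} {m : ℤ} :
    ⌊t / s⌋ = m ↔ s * m ≤ t ∧ t < s * m + s := by
  rw [Int.floor_eq_iff, le_div_iff₀ hs, div_lt_iff₀ hs]
  constructor
  · rintro ⟨h1, h2⟩; constructor <;> nlinarith
  · rintro ⟨h1, h2⟩; constructor <;> nlinarith

lemma floor_self_cube {s : ℝ} (hs : 0 < s) (m : ℤ) : ⌊(s * m) / s⌋ = m := by
  rw [floor_eq_iff' hs]
  constructor <;> nlinarith

lemma floor_add_eq {s r t u : ℝ} (hs : 0 < s) (hgood : ∀ m : ℤ, r ≤ |t - s * m|)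
    (hu : |u| < r) : ⌊(t + u) / s⌋ = ⌊t / s⌋ := by
  have h0 := (floor_eq_iff' hs (t := t) (m := ⌊t / s⌋)).mp rfl
  have h1 := hgood ⌊t / s⌋
  have h2 := hgood (⌊t / s⌋ + 1)
  have hu' := abs_lt.mp hu
  rw [floor_eq_iff' hs]
  push_cast at h2
  rcases le_abs.mp h1 with h1' | h1'
  · rcases le_abs.mp h2 with h2' | h2'
    · constructor <;> nlinarith
    · constructor <;> nlinarith
  · exfalso; nlinarith

lemma bad_band {s r t : ℝ} (hs : 0 < s) (h : ∃ m : ℤ, |t - s * m| < r) :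
    t - s * ⌊t / s⌋ < r ∨ s * ⌊t / s⌋ + s - t < r := by
  obtain ⟨m, hm⟩ := h
  have h0 := (floor_eq_iff' hs (t := t) (m := ⌊t / s⌋)).mp rfl
  have hm' := abs_lt.mp hm
  rcases le_or_gt m ⌊t / s⌋ with h | h
  · left
    have : (m : ℝ) ≤ (⌊t / s⌋ : ℝ) := by exact_mod_cast h
    nlinarith
  · right
    have : (⌊t / s⌋ : ℝ) + 1 ≤ (m : ℝ) := by exact_mod_cast h
    nlinarith

lemma volume_coord_set (I : Fin d → Set ℝ) (hI : ∀ i, MeasurableSet (I i)) :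
    volume {y : EuclideanSpace ℝ (Fin d) | ∀ i, y i ∈ I i} = ∏ i, volume (I i) := by
  have heq : {y : EuclideanSpace ℝ (Fin d) | ∀ i, y i ∈ I i}
      = ⇑((MeasurableEquiv.toLp 2 (Fin d → ℝ)).symm) ⁻¹' Set.pi Set.univ I := by
    ext y
    simp [Set.mem_pi]
  rw [heq, (EuclideanSpace.volume_preserving_symm_measurableEquiv_toLp (Fin d)).measure_preimage
    ((MeasurableSet.univ_pi fun i => hI i).nullMeasurableSet), volume_pi_pi]

lemma dyadicCubeK_eq (m : ℤ) (k : Fin d → ℤ) :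
    dyadicCubeK d m k = {y : EuclideanSpace ℝ (Fin d) |
      ∀ i, y i ∈ Set.Ico ((2:ℝ) ^ m * k i) ((2:ℝ) ^ m * k i + (2:ℝ) ^ m)} := by
  ext y
  simp only [dyadicCubeK, Set.mem_setOf_eq, Set.mem_Ico]
  exact forall_congr' fun i => by rw [floor_eq_iff' (zpow_pos two_pos m)]

lemma measurableSet_dyadicCubeK (m : ℤ) (k : Fin d → ℤ) :
    MeasurableSet (dyadicCubeK d m k) := by
  rw [dyadicCubeK_eq]
  have : {y : EuclideanSpace ℝ (Fin d) |
      ∀ i, y i ∈ Set.Ico ((2:ℝ) ^ m * k i) ((2:ℝ) ^ m * k i + (2:ℝ) ^ m)}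
      = ⋂ i, (fun y : EuclideanSpace ℝ (Fin d) => y i) ⁻¹'
        Set.Ico ((2:ℝ) ^ m * k i) ((2:ℝ) ^ m * k i + (2:ℝ) ^ m) := by
    ext y; simp
  rw [this]
  exact MeasurableSet.iInter fun i => measurableSet_Ico.preimage (measurable_coord i)

lemma volume_dyadicCubeK (m : ℤ) (k : Fin d → ℤ) :
    volume (dyadicCubeK d m k) = ENNReal.ofReal ((2:ℝ) ^ m) ^ d := by
  rw [dyadicCubeK_eq, volume_coord_set _ fun i => measurableSet_Ico]
  simp [Real.volume_Ico]

lemma mem_dyadicCubeK_self (m : ℤ) (x : EuclideanSpace ℝ (Fin d)) :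
    x ∈ dyadicCubeK d m (fun i => ⌊x i / (2:ℝ) ^ m⌋) := fun _ => rfl

lemma iUnion_dyadicCubeK (m : ℤ) :
    (⋃ k : Fin d → ℤ, dyadicCubeK d m k) = Set.univ := by
  ext x
  simp only [Set.mem_iUnion, Set.mem_univ, iff_true]
  exact ⟨_, mem_dyadicCubeK_self m x⟩

lemma pairwise_disjoint_dyadicCubeK (m : ℤ) :
    Pairwise (Function.onFun Disjoint fun k : Fin d → ℤ => dyadicCubeK d m k) := by
  intro k k' hkk'
  rw [Function.onFun, Set.disjoint_left]
  intro x hx hx'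
  exact hkk' (funext fun i => (hx i).symm.trans (hx' i))

lemma lintegral_eq_tsum_cubes (m : ℤ) (f : EuclideanSpace ℝ (Fin d) → ℝ≥0∞)
    (A : Set (EuclideanSpace ℝ (Fin d))) (hA : MeasurableSet A) :
    ∫⁻ x in A, f x = ∑' k : Fin d → ℤ, ∫⁻ x in A ∩ dyadicCubeK d m k, f x := by
  have : A = ⋃ k : Fin d → ℤ, A ∩ dyadicCubeK d m k := by
    rw [← Set.inter_iUnion, iUnion_dyadicCubeK, Set.inter_univ]
  nth_rewrite 1 [this]
  rw [lintegral_iUnion (fun k => hA.inter (measurableSet_dyadicCubeK m k))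
    ((pairwise_disjoint_dyadicCubeK m).mono fun k k' h => h.mono
      Set.inter_subset_right Set.inter_subset_right)]

end AuxLemmas
section Aux2

variable {d : ℕ}

lemma stronglyMeasurable_of_cube_const {B : Type*} [NormedAddCommGroup B] (m : ℤ)
    (h : EuclideanSpace ℝ (Fin d) → B)
    (hconst : ∀ x y, y ∈ dyadicCube d m x → h y = h x) : StronglyMeasurable h := by
  borelize B
  set s : ℝ := (2:ℝ) ^ m with hs_def
  have hs : 0 < s := zpow_pos two_pos m
  set K : EuclideanSpace ℝ (Fin d) → (Fin d → ℤ) := fun x i => ⌊x i / s⌋ with hK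
  set c : (Fin d → ℤ) → EuclideanSpace ℝ (Fin d) :=
    fun k => MeasurableEquiv.toLp 2 (Fin d → ℝ) (fun i => s * k i) with hc
  have hci : ∀ (k : Fin d → ℤ) (i : Fin d), (c k) i = s * k i := fun k i => rfl
  have hmem : ∀ x, h x = ((h ∘ c) ∘ K) x := by
    intro x
    refine (hconst x (c (K x)) fun i => ?_).symm
    rw [hci]
    exact floor_self_cube hs _
  have hKmeas : Measurable K :=
    measurable_pi_lambda _ fun i => Int.measurable_floor.comp ((measurable_coord i).div_const s)
  have : StronglyMeasurable ((h ∘ c) ∘ K) := by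
    refine stronglyMeasurable_iff_measurable_separable.mpr ⟨?_, ?_⟩
    · exact (measurable_of_countable (h ∘ c)).comp hKmeas
    · exact ((Set.countable_range (h ∘ c)).isSeparable).mono
        (Set.range_comp_subset_range _ _)
  rw [show h = (h ∘ c) ∘ K from funext hmem]
  exact this

lemma lintegral_nnnorm_rpow_le {α : Type*} [MeasurableSpace α] {μ : MeasureTheory.Measure α}
    [MeasureTheory.IsFiniteMeasure μ]
    {B : Type*} [NormedAddCommGroup B] {f : α → B}
    (hf : MeasureTheory.AEStronglyMeasurable f μ) {q : ℝ} (hq : 1 ≤ q) :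
    (∫⁻ a, (‖f a‖₊ : ℝ≥0∞) ∂μ) ^ q ≤
      (μ Set.univ) ^ (q - 1) * ∫⁻ a, (‖f a‖₊ : ℝ≥0∞) ^ q ∂μ := by
  have hq0 : (0:ℝ) < q := lt_of_lt_of_le one_pos hq
  have h := MeasureTheory.eLpNorm_le_eLpNorm_mul_rpow_measure_univ
    (p := 1) (q := ENNReal.ofReal q) (by simpa using ENNReal.one_le_ofReal.mpr hq) hf
  rw [MeasureTheory.eLpNorm_one_eq_lintegral_enorm,
    MeasureTheory.eLpNorm_eq_lintegral_rpow_enorm (by simp [hq0]) (by simp),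
    ENNReal.toReal_ofReal hq0.le] at h
  simp only [ENNReal.toReal_one] at h
  calc (∫⁻ a, (‖f a‖₊ : ℝ≥0∞) ∂μ) ^ q
      ≤ ((∫⁻ a, (‖f a‖₊ : ℝ≥0∞) ^ q ∂μ) ^ (1/q) * μ Set.univ ^ (1/1 - 1/q)) ^ q :=
        ENNReal.rpow_le_rpow h hq0.le
    _ = (μ Set.univ) ^ (q - 1) * ∫⁻ a, (‖f a‖₊ : ℝ≥0∞) ^ q ∂μ := by
        rw [ENNReal.mul_rpow_of_nonneg _ _ hq0.le, ← ENNReal.rpow_mul, ← ENNReal.rpow_mul]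
        rw [one_div, inv_mul_cancel₀ hq0.ne']
        rw [ENNReal.rpow_one, mul_comm]
        congr 2
        field_simp

lemma setLIntegral_le_of_cube_bound {m : ℤ} (g : EuclideanSpace ℝ (Fin d) → ℝ≥0∞)
    (hgc : ∀ k : Fin d → ℤ, ∀ x ∈ dyadicCubeK d m k, ∀ y ∈ dyadicCubeK d m k, g x = g y)
    (A : Set (EuclideanSpace ℝ (Fin d))) (hA : MeasurableSet A) (γ c : ℝ≥0∞)
    (hvol : ∀ k, volume (A ∩ dyadicCubeK d m k) * c ≤ γ * volume (dyadicCubeK d m k)) :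
    (∫⁻ x in A, g x) * c ≤ γ * ∫⁻ x, g x := by
  classical
  set s : ℝ := (2:ℝ) ^ m with hs_def
  have hs : 0 < s := zpow_pos two_pos m
  set ctr : (Fin d → ℤ) → EuclideanSpace ℝ (Fin d) :=
    fun k => MeasurableEquiv.toLp 2 (Fin d → ℝ) (fun i => s * k i) with hctr
  have hctrmem : ∀ k, ctr k ∈ dyadicCubeK d m k := by
    intro k i
    exact floor_self_cube hs _
  have hval : ∀ (k : Fin d → ℤ) (S : Set (EuclideanSpace ℝ (Fin d))), MeasurableSet S →
      S ⊆ dyadicCubeK d m k → ∫⁻ x in S, g x = g (ctr k) * volume S := by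
    intro k S hSm hSsub
    rw [MeasureTheory.setLIntegral_congr_fun hSm
      (fun y hy => hgc k y (hSsub hy) (ctr k) (hctrmem k)),
      MeasureTheory.setLIntegral_const]
  calc (∫⁻ x in A, g x) * c
      = (∑' k : Fin d → ℤ, ∫⁻ x in A ∩ dyadicCubeK d m k, g x) * c := by
        rw [lintegral_eq_tsum_cubes m g A hA]
    _ = ∑' k : Fin d → ℤ, (g (ctr k) * volume (A ∩ dyadicCubeK d m k) * c) := by
        rw [ENNReal.tsum_mul_right]
        congr 1
        exact tsum_congr fun k => by
          rw [hval k _ (hA.inter (measurableSet_dyadicCubeK m k)) Set.inter_subset_right]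
    _ ≤ ∑' k : Fin d → ℤ, (g (ctr k) * (γ * volume (dyadicCubeK d m k))) := by
        refine ENNReal.tsum_le_tsum fun k => ?_
        rw [mul_assoc]
        exact mul_le_mul_right (hvol k) _
    _ = γ * ∑' k : Fin d → ℤ, ∫⁻ x in dyadicCubeK d m k, g x := by
        rw [← ENNReal.tsum_mul_left]
        exact tsum_congr fun k => by
          rw [hval k _ (measurableSet_dyadicCubeK m k) subset_rfl]; ring
    _ = γ * ∫⁻ x, g x := by
        congr 1
        rw [← MeasureTheory.setLIntegral_univ,
          lintegral_eq_tsum_cubes m g Set.univ MeasurableSet.univ]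
        simp [Set.univ_inter]

end Aux2
section Aux3

variable {d : ℕ}

lemma band_inter_cube_vol (hd : 1 ≤ d) (m : ℤ) {w : ℝ} (hw : 0 < w) (k : Fin d → ℤ) :
    volume ({x : EuclideanSpace ℝ (Fin d) | ∃ i, ∃ j : ℤ, |x i - (2:ℝ)^m * j| < w}
        ∩ dyadicCubeK d m k) * ENNReal.ofReal ((2:ℝ)^m)
      ≤ ENNReal.ofReal (2 * w * d) * volume (dyadicCubeK d m k) := by
  classical
  set s : ℝ := (2:ℝ)^m with hs_def
  have hs : 0 < s := zpow_pos two_pos m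
  set I : Fin d → Fin d → Set ℝ := fun i jj =>
    if jj = i then Set.Ico (s * k i) (s * k i + w) ∪ Set.Ioo (s * k i + s - w) (s * k i + s)
    else Set.Ico (s * k jj) (s * k jj + s) with hI
  have hImeas : ∀ i jj, MeasurableSet (I i jj) := by
    intro i jj
    simp only [hI]
    split_ifs
    · exact measurableSet_Ico.union measurableSet_Ioo
    · exact measurableSet_Ico
  have hsub : {x : EuclideanSpace ℝ (Fin d) | ∃ i, ∃ j : ℤ, |x i - s * j| < w}
      ∩ dyadicCubeK d m k
      ⊆ ⋃ i : Fin d, {y : EuclideanSpace ℝ (Fin d) | ∀ jj, y jj ∈ I i jj} := by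
    rintro x ⟨⟨i, j, hij⟩, hcube⟩
    refine Set.mem_iUnion.mpr ⟨i, fun jj => ?_⟩
    have hcjj := (floor_eq_iff' hs).mp (hcube jj)
    simp only [hI]
    split_ifs with hji
    · subst hji
      have hb := bad_band hs ⟨j, hij⟩
      rw [hcube jj] at hb
      rcases hb with hb | hb
      · exact Or.inl ⟨hcjj.1, by linarith⟩
      · exact Or.inr ⟨by linarith, hcjj.2⟩
    · exact ⟨hcjj.1, hcjj.2⟩
  have hSvol : ∀ i : Fin d,
      volume {y : EuclideanSpace ℝ (Fin d) | ∀ jj, y jj ∈ I i jj}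
        ≤ ENNReal.ofReal (2 * w) * ENNReal.ofReal s ^ (d - 1) := by
    intro i
    rw [volume_coord_set _ (hImeas i)]
    rw [← Finset.mul_prod_erase Finset.univ _ (Finset.mem_univ i)]
    have h1 : volume (I i i) ≤ ENNReal.ofReal (2 * w) := by
      simp only [hI, if_pos rfl]
      refine le_trans (measure_union_le _ _) ?_
      rw [Real.volume_Ico, Real.volume_Ioo]
      rw [← ENNReal.ofReal_add (by linarith) (by linarith)]
      apply ENNReal.ofReal_le_ofReal
      nlinarith
    have h2 : ∏ jj ∈ Finset.univ.erase i, volume (I i jj) = ENNReal.ofReal s ^ (d - 1) := by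
      rw [Finset.prod_congr rfl (fun jj hjj => ?_)]
      · rw [Finset.prod_const, Finset.card_erase_of_mem (Finset.mem_univ i), Finset.card_univ,
          Fintype.card_fin]
      · simp only [hI]
        rw [if_neg (Finset.ne_of_mem_erase hjj), Real.volume_Ico]
        norm_num
    rw [h2]
    exact mul_le_mul_left h1 _
  calc volume ({x : EuclideanSpace ℝ (Fin d) | ∃ i, ∃ j : ℤ, |x i - s * j| < w}
        ∩ dyadicCubeK d m k) * ENNReal.ofReal s
      ≤ (∑' i : Fin d, volume {y : EuclideanSpace ℝ (Fin d) | ∀ jj, y jj ∈ I i jj})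
          * ENNReal.ofReal s := by
        refine mul_le_mul_left (le_trans (measure_mono hsub) ?_) _
        exact measure_iUnion_le _
    _ ≤ (∑' _ : Fin d, ENNReal.ofReal (2 * w) * ENNReal.ofReal s ^ (d - 1))
          * ENNReal.ofReal s :=
        mul_le_mul_left (ENNReal.tsum_le_tsum hSvol) _
    _ = ENNReal.ofReal (2 * w * d) * volume (dyadicCubeK d m k) := by
        rw [tsum_fintype, Finset.sum_const, Finset.card_univ, Fintype.card_fin,
          volume_dyadicCubeK]
        rw [nsmul_eq_mul]
        rw [show ENNReal.ofReal (2 * w * d) = ENNReal.ofReal (2 * w) * (d : ℝ≥0∞) by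
          rw [← ENNReal.ofReal_natCast d, ← ENNReal.ofReal_mul (by linarith)]]
        rw [show d = (d - 1) + 1 from (Nat.succ_pred_eq_of_pos hd).symm, pow_succ]
        ring_nf
        rw [Nat.add_sub_cancel_left]

end Aux3

theorem long_variation_building_block_constant_case
    (d : ℕ) (hd : 1 ≤ d) (q0 : ℝ) (hq0 : 1 ≤ q0) :
    ∃ C : ℝ, 0 < C ∧
      ∀ (B : Type) (_ : NormedAddCommGroup B) (_ : NormedSpace ℝ B) (_ : CompleteSpace B),
        ∀ (k n : ℤ), k < n →
          ∀ h : EuclideanSpace ℝ (Fin d) → B,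
            AEStronglyMeasurable h volume →
            (∫⁻ x, (‖h x‖₊ : ℝ≥0∞) ^ q0) < ∞ →
            (∀ x y, y ∈ dyadicCube d (n - 1) x → h y = h x) →
            ∫⁻ x, (‖ballAvg d h ((2:ℝ) ^ k) x - h x‖₊ : ℝ≥0∞) ^ q0 ≤
              ENNReal.ofReal (C * (2:ℝ) ^ (k - n)) * ∫⁻ x, (‖h x‖₊ : ℝ≥0∞) ^ q0 := by
  have hdR : (0:ℝ) < d := by exact_mod_cast Nat.lt_of_lt_of_le Nat.zero_lt_one hd
  have hq0pos : (0:ℝ) < q0 := lt_of_lt_of_le one_pos hq0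
  have h2q0 : (0:ℝ) < (2:ℝ) ^ q0 := Real.rpow_pos_of_pos two_pos q0
  refine ⟨16 * 2 ^ q0 * d, by positivity, ?_⟩
  intro B iB1 iB2 iB3 k n hkn h hmeasAE hIfin hconst
  set s : ℝ := (2:ℝ) ^ (n - 1) with hs_def
  set r : ℝ := (2:ℝ) ^ k with hr_def
  have hs : 0 < s := zpow_pos two_pos _
  have hr : 0 < r := zpow_pos two_pos _
  set Bl : Set (EuclideanSpace ℝ (Fin d)) := Metric.ball 0 r with hBl_def
  set V : ℝ≥0∞ := volume Bl with hV_def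
  have hV0 : V ≠ 0 := (Metric.measure_ball_pos _ _ hr).ne'
  have hVtop : V ≠ ⊤ := measure_ball_lt_top.ne
  have hVtR : (0:ℝ) < V.toReal := ENNReal.toReal_pos hV0 hVtop
  haveI hfin : IsFiniteMeasure (volume.restrict Bl) :=
    ⟨by rw [Measure.restrict_apply_univ]; exact measure_ball_lt_top⟩
  have hVr : (volume.restrict Bl) Set.univ = V := by rw [Measure.restrict_apply_univ]
  have hsm : StronglyMeasurable h := stronglyMeasurable_of_cube_const (n-1) h hconst
  set g : EuclideanSpace ℝ (Fin d) → ℝ≥0∞ := fun x => (‖h x‖₊ : ℝ≥0∞) ^ q0 with hg_def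
  have hgmeas : Measurable g := hsm.enorm.pow_const q0
  set I : ℝ≥0∞ := ∫⁻ x, g x with hI_def
  have hgc : ∀ x y, y ∈ dyadicCube d (n-1) x → g y = g x := by
    intro x y hy
    simp only [hg_def]
    rw [hconst x y hy]
  -- bad sets
  have hGm : ∀ w : ℝ, MeasurableSet
      {x : EuclideanSpace ℝ (Fin d) | ∃ i, ∃ j : ℤ, |x i - s * j| < w} := by
    intro w
    have : {x : EuclideanSpace ℝ (Fin d) | ∃ i, ∃ j : ℤ, |x i - s * j| < w}
        = ⋃ i, ⋃ j : ℤ, (fun x : EuclideanSpace ℝ (Fin d) => x i) ⁻¹'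
            (Set.Ioo (s * j - w) (s * j + w)) := by
      ext x
      simp only [Set.mem_setOf_eq, Set.mem_iUnion, Set.mem_preimage, Set.mem_Ioo]
      constructor
      · rintro ⟨i, j, hij⟩
        have := abs_lt.mp hij
        exact ⟨i, j, by linarith [this.1, this.2], by linarith [this.1, this.2]⟩
      · rintro ⟨i, j, h1, h2⟩
        exact ⟨i, j, abs_lt.mpr ⟨by linarith, by linarith⟩⟩
    rw [this]
    exact MeasurableSet.iUnion fun i => MeasurableSet.iUnion fun j =>
      measurableSet_Ioo.preimage (measurable_coord i)
  set G : Set (EuclideanSpace ℝ (Fin d)) :=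
    {x : EuclideanSpace ℝ (Fin d) | ∃ i, ∃ j : ℤ, |x i - s * j| < r} with hG_def
  set G2 : Set (EuclideanSpace ℝ (Fin d)) :=
    {x : EuclideanSpace ℝ (Fin d) | ∃ i, ∃ j : ℤ, |x i - s * j| < 2 * r} with hG2_def
  have hGmeas : MeasurableSet G := hGm r
  have hG2meas : MeasurableSet G2 := hGm (2 * r)
  -- vanishing off G
  have hgood : ∀ x, x ∉ G → ballAvg d h r x = h x := by
    intro x hx
    have hxy : Set.EqOn (fun y => h (x + y)) (fun _ => h x) Bl := by
      intro y hy
      refine hconst x (x + y) fun i => ?_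
      have h1 : (x + y) i = x i + y i := rfl
      rw [h1]
      refine floor_add_eq hs (fun j => not_lt.mp fun hc => hx ⟨i, j, hc⟩) ?_
      exact lt_of_le_of_lt (coord_abs_le_norm y i) (mem_ball_zero_iff.mp hy)
    show (volume Bl).toReal⁻¹ • (∫ y in Bl, h (x + y)) = h x
    rw [setIntegral_congr_fun measurableSet_ball hxy, setIntegral_const, measureReal_def, smul_smul,
      inv_mul_cancel₀ hVtR.ne', one_smul]
  -- uniform bound on h, integrability
  have hIcube : ∀ z, g z * ENNReal.ofReal s ^ d ≤ I := by
    intro z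
    have hz : ∀ y ∈ dyadicCubeK d (n-1) (fun i => ⌊z i / (2:ℝ) ^ (n-1)⌋), g y = g z := by
      intro y hy
      exact hgc z y fun i => (hy i).trans rfl
    calc g z * ENNReal.ofReal s ^ d
        = ∫⁻ y in dyadicCubeK d (n-1) (fun i => ⌊z i / (2:ℝ) ^ (n-1)⌋), g y := by
          rw [setLIntegral_congr_fun (measurableSet_dyadicCubeK _ _) hz,
            setLIntegral_const, volume_dyadicCubeK]
      _ ≤ I := setLIntegral_le_lintegral _ _
  have hsd0 : (ENNReal.ofReal s ^ d) ≠ 0 := by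
    exact pow_ne_zero _ (ENNReal.ofReal_pos.mpr hs).ne'
  have hsdtop : (ENNReal.ofReal s ^ d) ≠ ⊤ := ENNReal.pow_ne_top ENNReal.ofReal_ne_top
  set M : ℝ := ((I / ENNReal.ofReal s ^ d) ^ (1/q0)).toReal with hM_def
  have hhM : ∀ z, ‖h z‖ ≤ M := by
    intro z
    have h1 : g z ≤ I / ENNReal.ofReal s ^ d :=
      (ENNReal.le_div_iff_mul_le (Or.inl hsd0) (Or.inl hsdtop)).mpr (hIcube z)
    have h2 : ((‖h z‖₊ : ℝ≥0∞)) ≤ (I / ENNReal.ofReal s ^ d) ^ (1/q0) := by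
      have h3 := ENNReal.rpow_le_rpow h1 (by positivity : (0:ℝ) ≤ 1/q0)
      rwa [hg_def, ← ENNReal.rpow_mul, mul_one_div, div_self hq0pos.ne',
        ENNReal.rpow_one] at h3
    have h3 : ((I / ENNReal.ofReal s ^ d) ^ (1/q0)) ≠ ⊤ :=
      ENNReal.rpow_ne_top_of_nonneg (by positivity) (ENNReal.div_lt_top hIfin.ne hsd0).ne
    calc ‖h z‖ = ((‖h z‖₊ : ℝ≥0∞)).toReal := by simp
      _ ≤ M := ENNReal.toReal_mono h3 h2
  have hint : ∀ x : EuclideanSpace ℝ (Fin d),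
      Integrable (fun y => h (x + y)) (volume.restrict Bl) := by
    intro x
    refine Integrable.mono' (integrable_const M)
      ((hsm.comp_measurable (measurable_const_add x)).aestronglyMeasurable) ?_
    exact ae_of_all _ fun y => hhM (x + y)
  set ω : ℝ≥0∞ := (2:ℝ≥0∞) ^ (q0 - 1) with hω_def
  have hωtop : ω ≠ ⊤ := by
    rw [hω_def]
    exact ENNReal.rpow_ne_top_of_nonneg (by linarith) (by norm_num)
  have hbound : ∀ x, (‖ballAvg d h r x - h x‖₊ : ℝ≥0∞) ^ q0 ≤
      V⁻¹ * ∫⁻ y in Bl, ω * (g (x + y) + g x) := by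
    intro x
    have heq : ballAvg d h r x - h x = (V.toReal)⁻¹ • ∫ y in Bl, (h (x + y) - h x) := by
      have h5 : (∫ y in Bl, (h (x + y) - h x)) = (∫ y in Bl, h (x + y)) - V.toReal • h x := by
        rw [integral_sub (hint x) (integrable_const _), setIntegral_const, measureReal_def]
      rw [h5, smul_sub, smul_smul, inv_mul_cancel₀ hVtR.ne', one_smul]
      rfl
    have h4 : (‖ballAvg d h r x - h x‖₊ : ℝ≥0∞) ≤
        V⁻¹ * ∫⁻ y in Bl, (‖h (x + y) - h x‖₊ : ℝ≥0∞) := by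
      rw [heq]
      calc (‖(V.toReal)⁻¹ • ∫ y in Bl, (h (x + y) - h x)‖₊ : ℝ≥0∞)
          = (‖(V.toReal)⁻¹‖₊ : ℝ≥0∞) * (‖∫ y in Bl, (h (x + y) - h x)‖₊ : ℝ≥0∞) := by
            rw [nnnorm_smul, ENNReal.coe_mul]
        _ = V⁻¹ * (‖∫ y in Bl, (h (x + y) - h x)‖₊ : ℝ≥0∞) := by
            rw [← enorm_eq_nnnorm, Real.enorm_eq_ofReal (by positivity), ENNReal.ofReal_inv_of_pos hVtR,
              ENNReal.ofReal_toReal hVtop]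
        _ ≤ V⁻¹ * ∫⁻ y in Bl, (‖h (x + y) - h x‖₊ : ℝ≥0∞) :=
            mul_le_mul_right (enorm_integral_le_lintegral_enorm _) _
    have hVexp : V⁻¹ ^ q0 * V ^ (q0 - 1) = V⁻¹ := by
      calc V⁻¹ ^ q0 * V ^ (q0 - 1) = (V ^ (-1:ℝ)) ^ q0 * V ^ (q0 - 1) := by
            rw [ENNReal.rpow_neg_one]
        _ = V ^ ((-1) * q0) * V ^ (q0 - 1) := by rw [← ENNReal.rpow_mul]
        _ = V ^ ((-1) * q0 + (q0 - 1)) := (ENNReal.rpow_add _ _ hV0 hVtop).symm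
        _ = V⁻¹ := by
            rw [show (-1) * q0 + (q0 - 1) = (-1 : ℝ) by ring, ENNReal.rpow_neg_one]
    calc (‖ballAvg d h r x - h x‖₊ : ℝ≥0∞) ^ q0
        ≤ (V⁻¹ * ∫⁻ y in Bl, (‖h (x + y) - h x‖₊ : ℝ≥0∞)) ^ q0 :=
          ENNReal.rpow_le_rpow h4 hq0pos.le
      _ = V⁻¹ ^ q0 * (∫⁻ y in Bl, (‖h (x + y) - h x‖₊ : ℝ≥0∞)) ^ q0 :=
          ENNReal.mul_rpow_of_nonneg _ _ hq0pos.le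
      _ ≤ V⁻¹ ^ q0 * (V ^ (q0 - 1) * ∫⁻ y in Bl, (‖h (x + y) - h x‖₊ : ℝ≥0∞) ^ q0) := by
          refine mul_le_mul_right ?_ _
          have h6 := lintegral_nnnorm_rpow_le (μ := volume.restrict Bl)
            (f := fun y => h (x + y) - h x)
            (((hsm.comp_measurable (measurable_const_add x)).sub
              stronglyMeasurable_const).aestronglyMeasurable) hq0
          rwa [hVr] at h6
      _ = V⁻¹ * ∫⁻ y in Bl, (‖h (x + y) - h x‖₊ : ℝ≥0∞) ^ q0 := by
          rw [← mul_assoc, hVexp]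
      _ ≤ V⁻¹ * ∫⁻ y in Bl, ω * (g (x + y) + g x) := by
          refine mul_le_mul_right (lintegral_mono fun y => ?_) _
          calc (‖h (x + y) - h x‖₊ : ℝ≥0∞) ^ q0
              ≤ ((‖h (x + y)‖₊ : ℝ≥0∞) + (‖h x‖₊ : ℝ≥0∞)) ^ q0 := by
                apply ENNReal.rpow_le_rpow _ hq0pos.le
                exact_mod_cast nnnorm_sub_le _ _
            _ ≤ ω * (g (x + y) + g x) := ENNReal.rpow_add_le_mul_rpow_add_rpow _ _ hq0
  -- translation bound
  have hswapbound : (∫⁻ x in G, ∫⁻ y in Bl, g (x + y)) ≤ V * ∫⁻ z in G2, g z := by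
    have hprod : Measurable fun p : EuclideanSpace ℝ (Fin d) × EuclideanSpace ℝ (Fin d) =>
        g (p.1 + p.2) := hgmeas.comp measurable_add
    rw [lintegral_lintegral_swap hprod.aemeasurable]
    have hinner : ∀ y ∈ Bl, (∫⁻ x in G, g (x + y)) ≤ ∫⁻ z in G2, g z := by
      intro y hy
      have hyn : ‖y‖ < r := mem_ball_zero_iff.mp hy
      set F : EuclideanSpace ℝ (Fin d) → ℝ≥0∞ :=
        fun z => G.indicator (fun _ => (1:ℝ≥0∞)) (z - y) * g z with hF_def
      calc ∫⁻ x in G, g (x + y)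
          = ∫⁻ x, G.indicator (fun x => g (x + y)) x := (lintegral_indicator hGmeas _).symm
        _ = ∫⁻ x, F (x + y) := by
            refine lintegral_congr fun x => ?_
            simp only [hF_def, add_sub_cancel_right]
            by_cases hx : x ∈ G <;> simp [hx]
        _ = ∫⁻ z, F z := lintegral_add_right_eq_self F y
        _ ≤ ∫⁻ z, G2.indicator g z := by
            refine lintegral_mono fun z => ?_
            by_cases hz : z - y ∈ G
            · obtain ⟨i, j, hij⟩ := hz
              have hzi : (z - y) i = z i - y i := rfl
              rw [hzi] at hij
              have h6 : |y i| < r := lt_of_le_of_lt (coord_abs_le_norm y i) hyn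
              have h7 : |z i - s * j| < 2 * r := by
                calc |z i - s * j| = |(z i - y i - s * j) + y i| := by congr 1; ring
                  _ ≤ |z i - y i - s * j| + |y i| := abs_add_le _ _
                  _ < r + r := add_lt_add hij h6
                  _ = 2 * r := by ring
              have hzG2 : z ∈ G2 := ⟨i, j, h7⟩
              have hzG : z - y ∈ G := ⟨i, j, by rw [hzi]; exact hij⟩
              simp only [hF_def, Set.indicator_of_mem hzG, Set.indicator_of_mem hzG2, one_mul]
              exact le_rfl
            · simp only [hF_def, Set.indicator_of_notMem hz, zero_mul]
              exact zero_le
        _ = ∫⁻ z in G2, g z := lintegral_indicator hG2meas _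
    calc ∫⁻ y in Bl, ∫⁻ x in G, g (x + y)
        ≤ ∫⁻ y in Bl, ∫⁻ z in G2, g z :=
          lintegral_mono_ae ((ae_restrict_iff' measurableSet_ball).mpr (ae_of_all _ hinner))
      _ = V * ∫⁻ z in G2, g z := by rw [setLIntegral_const, mul_comm]
  -- band measure bound
  have hband : (∫⁻ z in G2, g z) * ENNReal.ofReal s ≤ ENNReal.ofReal (2 * (2 * r) * d) * I := by
    refine setLIntegral_le_of_cube_bound (m := n-1) g ?_ G2 hG2meas _ _ ?_
    · intro kk x hx y hy
      exact hgc y x fun i => (hx i).trans (hy i).symm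
    · intro kk
      exact band_inter_cube_vol hd (n - 1) (by linarith : (0:ℝ) < 2 * r) kk
  have hGsub : G ⊆ G2 := by
    rintro x ⟨i, j, hij⟩
    exact ⟨i, j, by linarith⟩
  set X : ℝ≥0∞ := ∫⁻ z in G2, g z with hX_def
  have hinnermeas : Measurable fun x => ∫⁻ y in Bl, g (x + y) :=
    Measurable.lintegral_prod_right (f := fun x y => g (x + y)) (hgmeas.comp measurable_add)
  have hmain : (∫⁻ x, (‖ballAvg d h r x - h x‖₊ : ℝ≥0∞) ^ q0) ≤ ω * 2 * X := by
    calc ∫⁻ x, (‖ballAvg d h r x - h x‖₊ : ℝ≥0∞) ^ q0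
        ≤ ∫⁻ x, G.indicator (fun x => V⁻¹ * ∫⁻ y in Bl, ω * (g (x + y) + g x)) x := by
          refine lintegral_mono fun x => ?_
          by_cases hx : x ∈ G
          · rw [Set.indicator_of_mem hx]; exact hbound x
          · rw [Set.indicator_of_notMem hx, hgood x hx]
            simp [ENNReal.zero_rpow_of_pos hq0pos]
      _ = ∫⁻ x in G, V⁻¹ * ∫⁻ y in Bl, ω * (g (x + y) + g x) := lintegral_indicator hGmeas _
      _ = V⁻¹ * ∫⁻ x in G, ∫⁻ y in Bl, ω * (g (x + y) + g x) :=
          lintegral_const_mul' _ _ (ENNReal.inv_ne_top.mpr hV0)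
      _ = V⁻¹ * ∫⁻ x in G, ω * ((∫⁻ y in Bl, g (x + y)) + g x * V) := by
          congr 1
          refine lintegral_congr fun x => ?_
          have hm : Measurable fun a : EuclideanSpace ℝ (Fin d) => g (x + a) := by
            exact hgmeas.comp (measurable_const_add x)
          rw [lintegral_const_mul' _ _ hωtop, lintegral_add_left hm, setLIntegral_const]
      _ = V⁻¹ * (ω * ((∫⁻ x in G, ∫⁻ y in Bl, g (x + y)) + (∫⁻ x in G, g x) * V)) := by
          rw [lintegral_const_mul' _ _ hωtop, lintegral_add_left hinnermeas,
            lintegral_mul_const' _ _ hVtop]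
      _ ≤ V⁻¹ * (ω * ((V * X) + X * V)) := by
          refine mul_le_mul_right (mul_le_mul_right (add_le_add hswapbound ?_) _) _
          exact mul_le_mul_left (lintegral_mono_set hGsub) _
      _ = ω * 2 * X := by
          calc V⁻¹ * (ω * ((V * X) + X * V)) = (V⁻¹ * V) * (ω * 2 * X) := by ring
            _ = ω * 2 * X := by rw [ENNReal.inv_mul_cancel hV0 hVtop, one_mul]
  -- final scalar arithmetic
  have hscalar : ω * 2 * ENNReal.ofReal (2 * (2 * r) * d) ≤
      ENNReal.ofReal (16 * 2 ^ q0 * d * (2:ℝ) ^ (k - n)) * ENNReal.ofReal s := by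
    have hω' : ω = ENNReal.ofReal ((2:ℝ) ^ (q0 - 1)) := by
      rw [hω_def, show (2:ℝ≥0∞) = ENNReal.ofReal 2 by norm_num,
        ENNReal.ofReal_rpow_of_pos two_pos]
    have h2' : (2 : ℝ≥0∞) = ENNReal.ofReal 2 := by norm_num
    rw [hω', h2', ← ENNReal.ofReal_mul (by positivity), ← ENNReal.ofReal_mul (by positivity),
      ← ENNReal.ofReal_mul (by positivity)]
    apply ENNReal.ofReal_le_ofReal
    rw [hs_def, hr_def]
    have e1 : (2:ℝ) ^ (q0 - 1) * 2 = 2 ^ q0 := by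
      rw [Real.rpow_sub two_pos, Real.rpow_one]
      field_simp
    have e2 : (2:ℝ) ^ (k - n) * (2:ℝ) ^ (n - 1) = (2:ℝ) ^ (k - 1) := by
      rw [← zpow_add₀ (two_ne_zero (α := ℝ))]
      congr 1
      ring
    have e3 : (2:ℝ) ^ (k - 1 : ℤ) * 2 = (2:ℝ) ^ k := by
      rw [← zpow_add_one₀ (two_ne_zero (α := ℝ))]
      congr 1
      ring
    have h2k : (0:ℝ) < (2:ℝ) ^ k := zpow_pos two_pos k
    calc (2:ℝ) ^ (q0 - 1) * 2 * (2 * (2 * (2:ℝ) ^ k) * (d:ℝ))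
        = (2:ℝ) ^ q0 * ((2:ℝ) ^ k * (d:ℝ)) * 4 := by rw [← e1]; ring
      _ ≤ (2:ℝ) ^ q0 * ((2:ℝ) ^ k * (d:ℝ)) * 8 := by
          nlinarith [mul_pos h2q0 (mul_pos h2k hdR)]
      _ = 16 * (2:ℝ) ^ q0 * (d:ℝ) * ((2:ℝ) ^ (k - n) * (2:ℝ) ^ (n - 1)) := by
          rw [e2, ← e3]; ring
      _ = 16 * (2:ℝ) ^ q0 * (d:ℝ) * (2:ℝ) ^ (k - n) * (2:ℝ) ^ (n - 1) := by ring
  have hfinal : ω * 2 * X ≤ ENNReal.ofReal (16 * 2 ^ q0 * d * (2:ℝ) ^ (k - n)) * I := by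
    rw [← ENNReal.mul_le_mul_iff_left (c := ENNReal.ofReal s)
      (ENNReal.ofReal_pos.mpr hs).ne' ENNReal.ofReal_ne_top]
    calc ω * 2 * X * ENNReal.ofReal s = ω * 2 * (X * ENNReal.ofReal s) := by ring
      _ ≤ ω * 2 * (ENNReal.ofReal (2 * (2 * r) * d) * I) := mul_le_mul_right hband _
      _ = (ω * 2 * ENNReal.ofReal (2 * (2 * r) * d)) * I := by ring
      _ ≤ (ENNReal.ofReal (16 * 2 ^ q0 * d * (2:ℝ) ^ (k - n)) * ENNReal.ofReal s) * I :=
          mul_le_mul_left hscalar _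
      _ = ENNReal.ofReal (16 * 2 ^ q0 * d * (2:ℝ) ^ (k - n)) * I * ENNReal.ofReal s := by ring
  exact le_trans hmain hfinal
end
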